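/- If X is a 3×3 real matrix satisfying X = C_i^n + κ·(C̄·X^{-1})^D·X with κ ≥ 0, where (·)^D denotes the deviatoric part, then X = (1/(1+β))·(C_i^n + κ·C̄) where β := (κ/3)·tr(C̄·X^{-1}). In particular, X is a scalar multiple of C_i^n + κ·C̄. -/

import Mathlib

open Matrix

/-- Deviatoric part of a 3×3 matrix. -/
noncomputable def dev (A : Matrix (Fin 3) (Fin 3) ℝ) : Matrix (Fin 3) (Fin 3) ℝ :=
  A - (A.trace / 3) • (1 : Matrix (Fin 3) (Fin 3) ℝ)

theorem dev_mul_inv_mul (A X : Matrix (Fin 3) (Fin 3) ℝ) (hX : IsUnit X.det) :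
    dev (A * X⁻¹) * X = A - ((A * X⁻¹).trace / 3) • X := by
  rw [dev, sub_mul, smul_mul, Matrix.one_mul, Matrix.mul_assoc, nonsing_inv_mul X hX,
    Matrix.mul_one]

theorem eq_one_div_smul_of_eq_sub_smul {K M : Type*} [Field K] [AddCommGroup M] [Module K M]
    {x b : M} {c : K} (h : x = b - c • x) (hc : 1 + c ≠ 0) : x = (1 / (1 + c)) • b := by
  have hb : (1 + c) • x = b := by rw [add_smul, one_smul, eq_sub_iff_add_eq.mp h]
  rw [← hb, smul_smul, one_div, inv_mul_cancel₀ hc, one_smul]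

theorem EBM_solution_form_general (Cbar Cin : Matrix (Fin 3) (Fin 3) ℝ)
    (κ : ℝ)
    (X : Matrix (Fin 3) (Fin 3) ℝ) (hXinv : IsUnit X.det)
    (hX : X = Cin + κ • (dev (Cbar * X⁻¹) * X))
    (hβ : 1 + κ / 3 * (Cbar * X⁻¹).trace ≠ 0) :
    X = (1 / (1 + κ / 3 * (Cbar * X⁻¹).trace)) • (Cin + κ • Cbar) := by
  rw [dev_mul_inv_mul Cbar X hXinv] at hX
  refine eq_one_div_smul_of_eq_sub_smul ?_ hβ
  nth_rewrite 1 [hX]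
  module

/-- Any solution of the discretized Euler-backward equation is a scalar multiple
of `Cin + κ • Cbar`. -/
theorem EBM_solution_form (Cbar Cin : Matrix (Fin 3) (Fin 3) ℝ)
    (hCbar : Cbar.PosDef) (hCin : Cin.PosDef)
    (κ : ℝ) (hκ : 0 ≤ κ)
    (X : Matrix (Fin 3) (Fin 3) ℝ) (hXinv : IsUnit X.det)
    (hX : X = Cin + κ • (dev (Cbar * X⁻¹) * X))
    (hβ : 1 + κ / 3 * (Cbar * X⁻¹).trace ≠ 0) :
    X = (1 / (1 + κ / 3 * (Cbar * X⁻¹).trace)) • (Cin + κ • Cbar) :=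
  EBM_solution_form_general Cbar Cin κ X hXinv hX hβ
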